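/- Let H be a Hopf algebra with bijective antipode S, and define ψ: H⊗H → H⊗H by ψ(h'⊗h) = h⁽²⁾ ⊗ S⁻¹(h⁽¹⁾)h'h⁽³⁾. Then a right H-module and right H-comodule M is a right-right anti-Yetter-Drinfeld module (i.e., Δ_M(mh) = m⁽⁰⁾h⁽²⁾ ⊗ S⁻¹(h⁽¹⁾)m⁽¹⁾h⁽³⁾) if and only if M is an entwined module for ψ, i.e., Δ_M(mh) = m⁽⁰⁾ψ(m⁽¹⁾⊗h) where ψ(m⁽¹⁾⊗h) = h⁽²⁾ ⊗ S⁻¹(h⁽¹⁾)m⁽¹⁾h⁽³⁾. -/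
import Mathlib


open TensorProduct LinearMap Coalgebra

noncomputable section

variable (k : Type) [Field k] (H : Type) [Ring H] [HopfAlgebra k H]
variable (M : Type) [AddCommGroup M] [Module k M]

/-- The right-hand side `m⁽⁰⁾h⁽²⁾ ⊗ S⁻¹(h⁽¹⁾)m⁽¹⁾h⁽³⁾` of the right-right
anti-Yetter-Drinfeld condition, as a linear map `M ⊗ H → M ⊗ H`, where `Sinv`
plays the role of the inverse of the antipode. -/
def aydRHSrr (Sinv : H →ₗ[k] H) (act : M ⊗[k] H →ₗ[k] M)
    (coact : M →ₗ[k] M ⊗[k] H) : M ⊗[k] H →ₗ[k] M ⊗[k] H :=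
  map act (mul' k H ∘ₗ map (mul' k H ∘ₗ map Sinv LinearMap.id) LinearMap.id)
    ∘ₗ map LinearMap.id (TensorProduct.assoc k H H H).symm.toLinearMap
    ∘ₗ (TensorProduct.leftComm k H (M ⊗[k] H) (H ⊗[k] H)).toLinearMap
    ∘ₗ (TensorProduct.assoc k H (M ⊗[k] H) (H ⊗[k] H)).toLinearMap
    ∘ₗ map (TensorProduct.leftComm k M H H).toLinearMap LinearMap.id
    ∘ₗ (tensorTensorTensorComm k M H (H ⊗[k] H) H).toLinearMap
    ∘ₗ map coact (map comul LinearMap.id ∘ₗ comul)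

/-- The right-right anti-Yetter-Drinfeld condition
`Δ_M(m·h) = m⁽⁰⁾h⁽²⁾ ⊗ S⁻¹(h⁽¹⁾)m⁽¹⁾h⁽³⁾`. -/
def IsAYDrr (Sinv : H →ₗ[k] H) (act : M ⊗[k] H →ₗ[k] M)
    (coact : M →ₗ[k] M ⊗[k] H) : Prop :=
  coact ∘ₗ act = aydRHSrr k H M Sinv act coact

/-- The entwining map `ψ(h'⊗h) = h⁽²⁾ ⊗ S⁻¹(h⁽¹⁾)h'h⁽³⁾`. -/
def psiAYD (Sinv : H →ₗ[k] H) : H ⊗[k] H →ₗ[k] H ⊗[k] H :=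
  map LinearMap.id
      (mul' k H ∘ₗ map (mul' k H ∘ₗ map Sinv LinearMap.id) LinearMap.id)
    ∘ₗ map LinearMap.id (TensorProduct.assoc k H H H).symm.toLinearMap
    ∘ₗ (TensorProduct.leftComm k H H (H ⊗[k] H)).toLinearMap
    ∘ₗ (TensorProduct.assoc k H H (H ⊗[k] H)).toLinearMap
    ∘ₗ (TensorProduct.leftComm k H (H ⊗[k] H) H).toLinearMap
    ∘ₗ map LinearMap.id (map comul LinearMap.id ∘ₗ comul)

/-- `M` is an entwined module for the entwining map `ψ`:
`Δ_M(m·h) = m⁽⁰⁾·ψ(m⁽¹⁾⊗h)`. -/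
def IsEntwined (ψ : H ⊗[k] H →ₗ[k] H ⊗[k] H) (act : M ⊗[k] H →ₗ[k] M)
    (coact : M →ₗ[k] M ⊗[k] H) : Prop :=
  coact ∘ₗ act =
    map act LinearMap.id ∘ₗ (TensorProduct.assoc k M H H).symm.toLinearMap
      ∘ₗ map LinearMap.id ψ ∘ₗ (TensorProduct.assoc k M H H).toLinearMap
      ∘ₗ map coact LinearMap.id

set_option maxHeartbeats 2000000 in
set_option synthInstance.maxHeartbeats 400000 in
lemma aydRHSrr_eq_entwined (Sinv : H →ₗ[k] H) (act : M ⊗[k] H →ₗ[k] M)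
    (coact : M →ₗ[k] M ⊗[k] H) :
    aydRHSrr k H M Sinv act coact =
      map act LinearMap.id ∘ₗ (TensorProduct.assoc k M H H).symm.toLinearMap
        ∘ₗ map LinearMap.id (psiAYD k H Sinv)
        ∘ₗ (TensorProduct.assoc k M H H).toLinearMap
        ∘ₗ map coact LinearMap.id := by
  apply TensorProduct.ext'
  intro m h
  simp only [aydRHSrr, psiAYD, coe_comp, Function.comp_apply, map_tmul, id_coe, id_eq,
    LinearEquiv.coe_coe]
  generalize coact m = x
  induction x using TensorProduct.induction_on with
  | zero => simp
  | add a b ha hb => simp only [add_tmul, map_add, ha, hb]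
  | tmul m' h' =>
    simp only [coe_comp, Function.comp_apply, map_tmul, id_coe, id_eq,
      LinearEquiv.coe_coe, TensorProduct.assoc_tmul]
    generalize (map comul (LinearMap.id (R := k) (M := H))) (comul h) = z
    induction z using TensorProduct.induction_on with
    | zero =>
      simp only [tmul_zero, zero_tmul, map_zero, LinearEquiv.map_zero]
    | add a b ha hb => simp only [tmul_add, map_add, ha, hb]
    | tmul w c =>
      induction w using TensorProduct.induction_on with
      | zero =>
        simp only [tmul_zero, zero_tmul, map_zero, LinearEquiv.map_zero]
      | add a b ha hb => simp only [add_tmul, tmul_add, map_add, ha, hb]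
      | tmul a b =>
        simp only [TensorProduct.leftComm_tmul, TensorProduct.assoc_tmul,
          TensorProduct.assoc_symm_tmul, tensorTensorTensorComm_tmul, map_tmul,
          mul'_apply, coe_comp, Function.comp_apply, LinearEquiv.coe_coe,
          id_coe, id_eq, mul_assoc]

theorem statement6
    (Sinv : H →ₗ[k] H)
    (hSinv1 : Sinv ∘ₗ HopfAlgebra.antipode (R := k) = LinearMap.id)
    (hSinv2 : HopfAlgebra.antipode (R := k) ∘ₗ Sinv = LinearMap.id)
    (act : M ⊗[k] H →ₗ[k] M)
    (hact_one : ∀ m : M, act (m ⊗ₜ[k] (1 : H)) = m)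
    (hact_mul : ∀ (m : M) (g h : H),
      act (m ⊗ₜ[k] (g * h)) = act (act (m ⊗ₜ[k] g) ⊗ₜ[k] h))
    (coact : M →ₗ[k] M ⊗[k] H)
    (hcoassoc : map coact LinearMap.id ∘ₗ coact =
      (TensorProduct.assoc k M H H).symm.toLinearMap
        ∘ₗ map LinearMap.id comul ∘ₗ coact)
    (hcounit : (TensorProduct.rid k M).toLinearMap
        ∘ₗ map LinearMap.id (counit (R := k) (A := H)) ∘ₗ coact = LinearMap.id) :
    -- `M` is right-right anti-Yetter-Drinfeld iff it is entwined for `ψ`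
    IsAYDrr k H M Sinv act coact ↔ IsEntwined k H M (psiAYD k H Sinv) act coact := by
  unfold IsAYDrr IsEntwined
  rw [aydRHSrr_eq_entwined]
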